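/- Let G be a finite group, p an odd prime, and P a Sylow p-subgroup of G with |N_G(P)| odd. Then for every normal subgroup N of G, the only real conjugacy class of G/N whose size is not divisible by p is the class of the identity. That is, if x ∈ G/N is conjugate in G/N to x^{-1} and p does not divide the size of the conjugacy class of x in G/N, then x = 1. -/

import Mathlib

/-!
If `p ∤ |G : C_G(x)|`, some Sylow `p`-subgroup `R` centralizes `x`, so `x ∈ N_G(R)`. When `x` is
real, Burnside's fusion argument shows `x` is inverted by an element of `N_G(R)` as well, so `x` is
real in `N_G(R)`, which has odd order; in a group of odd order only the identity is real. The
hypothesis passes to `G/N` because, by Frattini's argument, `N_{G/N}(PN/N)` is the image of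
`N_G(P)`.
-/

open Subgroup

section

variable {G : Type*} [Group G]

theorem eq_one_of_isConj_inv_of_odd_card (hG : Odd (Nat.card G)) {x : G} (hx : IsConj x x⁻¹) :
    x = 1 := by
  obtain ⟨c, hc⟩ := isConj_iff.mp hx
  have hcx : SemiconjBy c x x⁻¹ := by rw [SemiconjBy, ← hc, inv_mul_cancel_right]
  have hc2 : Commute (c ^ 2) x := by
    rw [pow_two]
    exact (inv_inv x ▸ hcx.inv_right).mul_left hcx
  obtain ⟨j, hj⟩ : Odd (orderOf c) := hG.of_dvd_nat (orderOf_dvd_natCard c)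
  -- `c` is a power of `c ^ 2` because it has odd order
  have hc_comm : Commute c x := by
    have hc_pow : (c ^ 2) ^ (j + 1) = c := by
      rw [← pow_mul, show 2 * (j + 1) = orderOf c + 1 by omega, pow_succ, pow_orderOf_eq_one,
        one_mul]
    exact hc_pow ▸ hc2.pow_left (j + 1)
  have hx_inv : x⁻¹ = x := mul_right_cancel (hcx.symm.trans hc_comm.eq)
  have hx2 : orderOf x ∣ 2 :=
    orderOf_dvd_of_pow_eq_one (by rw [pow_two]; nth_rw 1 [← hx_inv]; exact inv_mul_cancel x)
  exact orderOf_eq_one_iff.mp <|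
    (hG.of_dvd_nat (orderOf_dvd_natCard x)).coprime_two_left.symm.eq_one_of_dvd hx2

theorem Sylow.card_normalizer_eq [Finite G] {p : ℕ} [Fact p.Prime] (P Q : Sylow p G) :
    Nat.card (normalizer (P : Set G)) = Nat.card (normalizer (Q : Set G)) := by
  have h := (card_mul_index (normalizer (P : Set G))).trans
    (card_mul_index (normalizer (Q : Set G))).symm
  rw [← P.card_eq_index_normalizer, ← Q.card_eq_index_normalizer] at h
  exact Nat.eq_of_mul_eq_mul_right Nat.card_pos h

theorem Sylow.exists_le_of_not_dvd_index [Finite G] {p : ℕ} [Fact p.Prime] {H : Subgroup G}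
    (hH : ¬ p ∣ H.index) : ∃ P : Sylow p G, (P : Subgroup G) ≤ H := by
  obtain ⟨Q⟩ : Nonempty (Sylow p H) := Sylow.nonempty
  refine ⟨(Q.2.map H.subtype).toSylow ?_, map_subtype_le _⟩
  rw [index_map_subtype]
  exact Nat.Prime.not_dvd_mul Fact.out Q.not_dvd_index hH

-- Frattini's argument
theorem Sylow.normalizer_le_normalizer_sup [Finite G] {p : ℕ} [Fact p.Prime] (P : Sylow p G)
    {H : Subgroup G} (hPH : (P : Subgroup G) ≤ H) :
    normalizer (H : Set G) ≤ normalizer (P : Set G) ⊔ H := by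
  intro g hg
  have hgPH : ((g • P : Sylow p G) : Subgroup G) ≤ H :=
    (map_mono hPH).trans_eq (mem_normalizer_iff_map_conj_eq.mp hg)
  obtain ⟨h, hh⟩ := MulAction.exists_smul_eq H ((g • P).subtype hgPH) (P.subtype hPH)
  simp_rw [Sylow.smul_subtype, Subgroup.smul_def, smul_smul] at hh
  have hhg : (h : G) * g ∈ normalizer (P : Set G) :=
    Sylow.smul_eq_iff_mem_normalizer.mp (Sylow.subtype_injective hh)
  rw [← inv_mul_cancel_left (h : G) g, sup_comm]
  exact mul_mem_sup (H.inv_mem h.2) hhg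

theorem Sylow.map_normalizer_eq_of_surjective [Finite G] {G' : Type*} [Group G'] {f : G →* G'}
    (hf : Function.Surjective f) {p : ℕ} [Fact p.Prime] (P : Sylow p G) :
    (normalizer (P : Set G)).map f = normalizer (P.mapSurjective hf : Set G') := by
  refine le_antisymm (le_normalizer_map f) ?_
  change normalizer ((P.map f : Subgroup G') : Set G') ≤ _
  rw [← comap_le_comap_of_surjective hf, comap_normalizer_eq_of_surjective _ hf, comap_map_eq,
    comap_map_eq]
  calc normalizer ((P ⊔ f.ker : Subgroup G) : Set G)
      ≤ normalizer (P : Set G) ⊔ (P ⊔ f.ker) := P.normalizer_le_normalizer_sup le_sup_left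
    _ = normalizer (P : Set G) ⊔ f.ker := by
      rw [← sup_assoc]; exact congrArg (· ⊔ f.ker) (sup_eq_left.mpr le_normalizer)

theorem Sylow.eq_one_of_isConj_inv_of_not_dvd_index [Finite G] {p : ℕ} [Fact p.Prime]
    (P : Sylow p G) (hP : Odd (Nat.card (normalizer (P : Set G)))) {x : G} (hx : IsConj x x⁻¹)
    (hpx : ¬ p ∣ (centralizer {x}).index) : x = 1 := by
  obtain ⟨R, hR⟩ := Sylow.exists_le_of_not_dvd_index hpx
  have hxR : x ∈ centralizer (R : Set G) := fun r hr ↦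
    (mem_centralizer_iff.mp (hR hr) x rfl).symm
  obtain ⟨c, hc⟩ := isConj_iff.mp hx
  -- Burnside: `x` and `x⁻¹` both centralize `R`, so they are already conjugate in `N_G(R)`
  obtain ⟨n, hn, hxn⟩ := R.conj_eq_normalizer_conj_of_mem_centralizer x c⁻¹ hxR
    (by rw [inv_inv, hc]; exact inv_mem hxR)
  rw [inv_inv, hc] at hxn
  have hxN : x ∈ normalizer (R : Set G) := centralizer_le_normalizer _ hxR
  have hconj : IsConj (⟨x, hxN⟩ : normalizer (R : Set G)) ⟨x, hxN⟩⁻¹ :=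
    isConj_iff.mpr ⟨⟨n, hn⟩⁻¹, Subtype.ext (by simp [hxn])⟩
  simpa using eq_one_of_isConj_inv_of_odd_card (R.card_normalizer_eq P ▸ hP) hconj

end

theorem real_pprime_classes_trivial_in_quotients_general
    {G : Type*} [Group G] [Finite G] (p : ℕ) [Fact p.Prime]
    (P : Sylow p G)
    (hodd : Odd (Nat.card (Subgroup.normalizer ((P : Subgroup G) : Set G))))
    (N : Subgroup G) [N.Normal]
    (x : G ⧸ N) (hreal : IsConj x x⁻¹)
    (hsize : ¬ p ∣ (Subgroup.centralizer {x} : Subgroup (G ⧸ N)).index) :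
    x = 1 := by
  have hπ := QuotientGroup.mk'_surjective N
  refine (P.mapSurjective hπ).eq_one_of_isConj_inv_of_not_dvd_index ?_ hreal hsize
  rw [← P.map_normalizer_eq_of_surjective hπ]
  exact hodd.of_dvd_nat (card_map_dvd _ _)

theorem real_pprime_classes_trivial_in_quotients
    {G : Type*} [Group G] [Finite G] (p : ℕ) [Fact p.Prime] (hoddp : Odd p)
    (P : Sylow p G)
    (hodd : Odd (Nat.card (Subgroup.normalizer ((P : Subgroup G) : Set G))))
    (N : Subgroup G) [N.Normal]
    (x : G ⧸ N) (hreal : IsConj x x⁻¹)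
    (hsize : ¬ p ∣ (Subgroup.centralizer {x} : Subgroup (G ⧸ N)).index) :
    x = 1 :=
  real_pprime_classes_trivial_in_quotients_general p P hodd N x hreal hsize
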